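/- Let A and B be finite types and let ρ be a density matrix on A × B. Then F(ρ,σ) ≤ 1 for every σ ∈ PPT#_2(A:B), and there exists σ ∈ PPT#_2(A:B) with F(ρ,σ) = 1 if and only if ρ^{T_B} is positive semidefinite. (In particular, the hash logarithmic fidelity of binegativity E_{#,2}^{1/2}(ρ) = −log sup_{σ ∈ PPT#_2} F(ρ,σ) is nonnegative and vanishes exactly on PPT states.) -/

import Mathlib

open Matrix
open scoped ComplexOrder

/-- Total positive semidefinite square root: the PSD square root of `M` if `M` is PSD,
and junk value `0` otherwise. -/
noncomputable def msqrt {n : Type*} [Fintype n] [DecidableEq n]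
    (M : Matrix n n ℂ) : Matrix n n ℂ :=
  letI := Classical.dec M.PosSemidef
  if h : M.PosSemidef then
    h.1.eigenvectorUnitary.1 * diagonal ((↑) ∘ Real.sqrt ∘ h.1.eigenvalues) *
      (star h.1.eigenvectorUnitary : Matrix n n ℂ)
  else 0

/-- The trace norm `‖M‖₁ = tr √(Mᴴ M)` of a complex matrix, as a real number. -/
noncomputable def traceNorm {n : Type*} [Fintype n] [DecidableEq n]
    (M : Matrix n n ℂ) : ℝ :=
  (msqrt (Mᴴ * M)).trace.re

/-- The partial transpose over the second party `B`:
`M^{T_B}((a,b),(a',b')) = M((a,b'),(a',b))`. -/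
def ptB {A B : Type*} (M : Matrix (A × B) (A × B) ℂ) : Matrix (A × B) (A × B) ℂ :=
  fun x y => M (x.1, y.2) (y.1, x.2)

/-- The matrix absolute value `|M| = √(Mᴴ M)`. -/
noncomputable def matAbs {n : Type*} [Fintype n] [DecidableEq n]
    (M : Matrix n n ℂ) : Matrix n n ℂ :=
  msqrt (Mᴴ * M)

/-- Uhlmann fidelity `F(ρ,σ) = (tr √(√σ ρ √σ))²` between positive semidefinite matrices. -/
noncomputable def fidelity {n : Type*} [Fintype n] [DecidableEq n]
    (ρ σ : Matrix n n ℂ) : ℝ :=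
  ((msqrt (msqrt σ * ρ * msqrt σ)).trace.re) ^ 2

/-- The set `PPT₂(A:B)`: positive semidefinite `σ` such that there exists `ω` with
`−ω ⪯ σ^{T_B} ⪯ ω` and `‖ω^{T_B}‖₁ ≤ 1`. -/
def PPT2set {A B : Type*} [Fintype A] [Fintype B] [DecidableEq A] [DecidableEq B] :
    Set (Matrix (A × B) (A × B) ℂ) :=
  {σ | σ.PosSemidef ∧ ∃ ω : Matrix (A × B) (A × B) ℂ,
    (ω - ptB σ).PosSemidef ∧ (ω + ptB σ).PosSemidef ∧ traceNorm (ptB ω) ≤ 1}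

/-- The set `PPT#₂(A:B)`: positive semidefinite `σ` such that there exists `ω` with
`|σ^{T_B}| ⪯ ω` and `‖ω^{T_B}‖₁ ≤ 1`. -/
def PPThash2set {A B : Type*} [Fintype A] [Fintype B] [DecidableEq A] [DecidableEq B] :
    Set (Matrix (A × B) (A × B) ℂ) :=
  {σ | σ.PosSemidef ∧ ∃ ω : Matrix (A × B) (A × B) ℂ,
    (ω - matAbs (ptB σ)).PosSemidef ∧ traceNorm (ptB ω) ≤ 1}

/-!
Write `s = tr √(√σ ρ √σ) = ‖√ρ √σ‖₁`. The polar decomposition of `X = √ρ √σ` provides a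
contraction `W` with `Wᴴ X = |X|`, and expanding `0 ≤ ‖W √σ - √ρ‖₂²` gives the AM–GM form
`2 s ≤ tr ρ + tr σ` of the Cauchy–Schwarz bound on the fidelity, with equality only if `ρ = σ`.
For `σ ∈ PPT#₂` with witness `ω` we have `tr σ ≤ tr |σ^{T_B}| ≤ tr ω = tr ω^{T_B} ≤ ‖ω^{T_B}‖₁ ≤ 1`,
so `s ≤ 1`; and `F(ρ,σ) = 1` forces `σ = ρ`, after which `tr |ρ^{T_B}| ≤ 1 = tr ρ^{T_B}` forces
`|ρ^{T_B}| = ρ^{T_B} ⪰ 0`. Conversely a PPT state lies in `PPT#₂` (take `ω = ρ^{T_B}`) and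
`F(ρ,ρ) = 1`.
-/

section Fidelity

open scoped MatrixOrder

variable {n : Type*} [Fintype n]

lemma Matrix.PosSemidef.re_trace_nonneg {M : Matrix n n ℂ} (hM : M.PosSemidef) :
    0 ≤ M.trace.re :=
  (Complex.nonneg_iff.mp hM.trace_nonneg).1

lemma Matrix.PosSemidef.eq_zero_of_re_trace_le {M : Matrix n n ℂ} (hM : M.PosSemidef)
    (h : M.trace.re ≤ 0) : M = 0 :=
  hM.trace_eq_zero_iff.mp <|
    Complex.ext (le_antisymm h hM.re_trace_nonneg) (Complex.nonneg_iff.mp hM.trace_nonneg).2.symm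

lemma re_trace_le_of_posSemidef_sub {M N : Matrix n n ℂ} (h : (N - M).PosSemidef) :
    M.trace.re ≤ N.trace.re := by
  simpa [trace_sub] using h.re_trace_nonneg

lemma re_trace_conjTranspose_sub_mul_sub (Y Z : Matrix n n ℂ) :
    ((Y - Z)ᴴ * (Y - Z)).trace.re =
      (Yᴴ * Y).trace.re + (Zᴴ * Z).trace.re - 2 * (Yᴴ * Z).trace.re := by
  have hconj : (Zᴴ * Y).trace.re = (Yᴴ * Z).trace.re := by
    rw [← conjTranspose_conjTranspose Y, ← conjTranspose_mul, trace_conjTranspose,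
      conjTranspose_conjTranspose, Complex.star_def, Complex.conj_re]
  simp only [conjTranspose_sub, Matrix.sub_mul, Matrix.mul_sub, trace_sub, Complex.sub_re, hconj]
  ring

variable [DecidableEq n]

lemma msqrt_eq_cfcSqrt {M : Matrix n n ℂ} (hM : M.PosSemidef) : msqrt M = CFC.sqrt M := by
  rw [CFC.sqrt_eq_cfc, cfc_nnreal_eq_real _ M hM.nonneg, hM.1.cfc_eq, IsHermitian.cfc,
    Unitary.conjStarAlgAut_apply]
  simp only [msqrt, dif_pos hM]
  congr 2
  refine congrArg diagonal (funext fun i => ?_)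
  simp [Real.coe_sqrt, Real.coe_toNNReal', max_eq_left (hM.eigenvalues_nonneg i)]

lemma posSemidef_msqrt {M : Matrix n n ℂ} (hM : M.PosSemidef) : (msqrt M).PosSemidef := by
  rw [msqrt_eq_cfcSqrt hM]
  exact (CFC.sqrt_nonneg M).posSemidef

lemma msqrt_mul_self {M : Matrix n n ℂ} (hM : M.PosSemidef) : msqrt M * msqrt M = M := by
  rw [msqrt_eq_cfcSqrt hM]
  exact CFC.sqrt_mul_sqrt_self M hM.nonneg

lemma conjTranspose_msqrt_mul_msqrt {M : Matrix n n ℂ} (hM : M.PosSemidef) :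
    (msqrt M)ᴴ * msqrt M = M := by
  rw [(posSemidef_msqrt hM).isHermitian.eq, msqrt_mul_self hM]

lemma msqrt_mul_conjTranspose_msqrt {M : Matrix n n ℂ} (hM : M.PosSemidef) :
    msqrt M * (msqrt M)ᴴ = M := by
  rw [(posSemidef_msqrt hM).isHermitian.eq, msqrt_mul_self hM]

lemma matAbs_eq_cfcAbs (M : Matrix n n ℂ) : matAbs M = CFC.abs M := by
  rw [matAbs, msqrt_eq_cfcSqrt (posSemidef_conjTranspose_mul_self M), CFC.abs,
    star_eq_conjTranspose]

lemma posSemidef_matAbs (M : Matrix n n ℂ) : (matAbs M).PosSemidef := by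
  rw [matAbs_eq_cfcAbs]
  exact (CFC.abs_nonneg M).posSemidef

lemma matAbs_of_posSemidef {M : Matrix n n ℂ} (hM : M.PosSemidef) : matAbs M = M := by
  rw [matAbs_eq_cfcAbs]
  exact CFC.abs_of_nonneg M hM.nonneg

lemma posSemidef_matAbs_sub_self {K : Matrix n n ℂ} (hK : K.IsHermitian) :
    (matAbs K - K).PosSemidef := by
  rw [matAbs_eq_cfcAbs, CFC.abs_sub_self K hK.isSelfAdjoint]
  exact (smul_nonneg zero_le_two (CFC.negPart_nonneg K)).posSemidef

lemma re_trace_le_traceNorm {K : Matrix n n ℂ} (hK : K.IsHermitian) :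
    K.trace.re ≤ traceNorm K :=
  re_trace_le_of_posSemidef_sub (posSemidef_matAbs_sub_self hK)

lemma exists_contraction_conjTranspose_mul_eq_matAbs (X : Matrix n n ℂ) :
    ∃ W : Matrix n n ℂ, (1 - Wᴴ * W).PosSemidef ∧ Wᴴ * X = matAbs X := by
  have hN : 0 ≤ Xᴴ * X := (posSemidef_conjTranspose_mul_self X).nonneg
  have hc (f : ℝ → ℝ) : ContinuousOn f (spectrum ℝ (Xᴴ * X)) :=
    (Xᴴ * X).finite_real_spectrum.continuousOn f
  -- `Q = (Xᴴ X)^{-1/2}` on the support of `Xᴴ X` and `0` on its kernel, thanks to `(√0)⁻¹ = 0`.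
  set Q := cfc (fun x : ℝ => (√x)⁻¹) (Xᴴ * X)
  have hQ : Qᴴ = Q := (cfc_predicate _ _ : IsSelfAdjoint Q)
  refine ⟨X * Q, ?_, ?_⟩
  · have hWW : (X * Q)ᴴ * (X * Q) = cfc (fun x : ℝ => (√x)⁻¹ * x * (√x)⁻¹) (Xᴴ * X) := by
      rw [cfc_mul _ _ _ (hc _) (hc _), cfc_mul _ _ _ (hc _) (hc _), cfc_id' ℝ (Xᴴ * X),
        conjTranspose_mul, hQ]
      simp only [Matrix.mul_assoc, Q]
    rw [hWW, ← cfc_one ℝ (Xᴴ * X), ← cfc_sub _ _ _ (hc _) (hc _)]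
    refine (cfc_nonneg fun x hx => ?_).posSemidef
    rcases (spectrum_nonneg_of_nonneg hN hx).eq_or_lt with rfl | hx
    · simp
    · rw [mul_comm, ← mul_assoc, ← mul_inv, Real.mul_self_sqrt hx.le, inv_mul_cancel₀ hx.ne']
      simp
  · rw [conjTranspose_mul, hQ, Matrix.mul_assoc, matAbs_eq_cfcAbs, CFC.abs,
      CFC.sqrt_eq_real_sqrt _ (by rwa [star_eq_conjTranspose]), cfcₙ_eq_cfc,
      star_eq_conjTranspose]
    conv_lhs => rw [← cfc_id' ℝ (Xᴴ * X), ← cfc_mul _ _ _ (hc _) (hc _)]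
    refine cfc_congr fun x hx => ?_
    rcases (spectrum_nonneg_of_nonneg hN hx).eq_or_lt with rfl | hx
    · simp
    · field_simp
      rw [Real.sq_sqrt hx.le]

lemma exists_posSemidef_sub_and_re_trace_eq_matAbs_mul (A B : Matrix n n ℂ) :
    ∃ Y : Matrix n n ℂ, (B * Bᴴ - Yᴴ * Y).PosSemidef ∧
      (Yᴴ * A).trace.re = (matAbs (A * B)).trace.re := by
  obtain ⟨W, hW, hWX⟩ := exists_contraction_conjTranspose_mul_eq_matAbs (A * B)
  refine ⟨W * Bᴴ, ?_, ?_⟩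
  · have hYY : (W * Bᴴ)ᴴ * (W * Bᴴ) = B * (Wᴴ * W) * Bᴴ := by
      simp only [conjTranspose_mul, conjTranspose_conjTranspose, Matrix.mul_assoc]
    rw [hYY]
    convert hW.mul_mul_conjTranspose_same B using 1
    rw [Matrix.mul_sub, Matrix.sub_mul, Matrix.mul_one]
  · rw [← hWX, conjTranspose_mul, conjTranspose_conjTranspose, Matrix.mul_assoc,
      trace_mul_comm B, Matrix.mul_assoc]

theorem two_mul_re_trace_matAbs_mul_le (A B : Matrix n n ℂ) :
    2 * (matAbs (A * B)).trace.re ≤ (Aᴴ * A).trace.re + (B * Bᴴ).trace.re := by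
  obtain ⟨Y, hY, hYtr⟩ := exists_posSemidef_sub_and_re_trace_eq_matAbs_mul A B
  have hsq := (posSemidef_conjTranspose_mul_self (Y - A)).re_trace_nonneg
  have hle := re_trace_le_of_posSemidef_sub hY
  rw [re_trace_conjTranspose_sub_mul_sub] at hsq
  linarith

theorem conjTranspose_mul_self_eq_of_two_mul_re_trace_matAbs_mul_eq {A B : Matrix n n ℂ}
    (h : 2 * (matAbs (A * B)).trace.re = (Aᴴ * A).trace.re + (B * Bᴴ).trace.re) :
    Aᴴ * A = B * Bᴴ := by
  obtain ⟨Y, hY, hYtr⟩ := exists_posSemidef_sub_and_re_trace_eq_matAbs_mul A B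
  have hsq := posSemidef_conjTranspose_mul_self (Y - A)
  have hsq_re := hsq.re_trace_nonneg
  have hle := hY.re_trace_nonneg
  rw [re_trace_conjTranspose_sub_mul_sub] at hsq_re
  rw [trace_sub, Complex.sub_re] at hle
  have hYB : B * Bᴴ - Yᴴ * Y = 0 :=
    hY.eq_zero_of_re_trace_le (by rw [trace_sub, Complex.sub_re]; linarith)
  have hYA : (Y - A)ᴴ * (Y - A) = 0 :=
    hsq.eq_zero_of_re_trace_le (by rw [re_trace_conjTranspose_sub_mul_sub]; linarith)
  rw [conjTranspose_mul_self_eq_zero, sub_eq_zero] at hYA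
  rw [← hYA, sub_eq_zero.mp hYB]

lemma sqrt_fidelity_eq {ρ σ : Matrix n n ℂ} (hρ : ρ.PosSemidef) (hσ : σ.PosSemidef) :
    √(fidelity ρ σ) = (matAbs (msqrt ρ * msqrt σ)).trace.re := by
  have hX : (msqrt ρ * msqrt σ)ᴴ * (msqrt ρ * msqrt σ) = msqrt σ * ρ * msqrt σ := by
    rw [conjTranspose_mul, (posSemidef_msqrt hσ).isHermitian.eq, Matrix.mul_assoc,
      ← Matrix.mul_assoc (msqrt ρ)ᴴ, conjTranspose_msqrt_mul_msqrt hρ, Matrix.mul_assoc]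
  rw [fidelity, ← hX, ← matAbs, Real.sqrt_sq (posSemidef_matAbs _).re_trace_nonneg]

lemma two_mul_sqrt_fidelity_le {ρ σ : Matrix n n ℂ} (hρ : ρ.PosSemidef) (hσ : σ.PosSemidef) :
    2 * √(fidelity ρ σ) ≤ ρ.trace.re + σ.trace.re := by
  simpa [sqrt_fidelity_eq hρ hσ, conjTranspose_msqrt_mul_msqrt hρ,
    msqrt_mul_conjTranspose_msqrt hσ] using two_mul_re_trace_matAbs_mul_le (msqrt ρ) (msqrt σ)

lemma eq_of_two_mul_sqrt_fidelity_eq {ρ σ : Matrix n n ℂ} (hρ : ρ.PosSemidef)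
    (hσ : σ.PosSemidef) (h : 2 * √(fidelity ρ σ) = ρ.trace.re + σ.trace.re) : ρ = σ := by
  have h' := conjTranspose_mul_self_eq_of_two_mul_re_trace_matAbs_mul_eq (A := msqrt ρ)
    (B := msqrt σ)
  rw [← sqrt_fidelity_eq hρ hσ, conjTranspose_msqrt_mul_msqrt hρ,
    msqrt_mul_conjTranspose_msqrt hσ] at h'
  exact h' h

lemma fidelity_self {ρ : Matrix n n ℂ} (hρ : ρ.PosSemidef) : fidelity ρ ρ = ρ.trace.re ^ 2 := by
  have h := sqrt_fidelity_eq hρ hρ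
  rw [msqrt_mul_self hρ, matAbs_of_posSemidef hρ] at h
  rw [← h, Real.sq_sqrt (by rw [fidelity]; positivity)]

theorem fidelity_le_one {ρ σ : Matrix n n ℂ} (hρ : ρ.PosSemidef) (hσ : σ.PosSemidef)
    (hρ1 : ρ.trace.re = 1) (hσ1 : σ.trace.re ≤ 1) : fidelity ρ σ ≤ 1 := by
  have := two_mul_sqrt_fidelity_le hρ hσ
  exact Real.sqrt_le_one.mp (by linarith)

theorem eq_of_fidelity_eq_one {ρ σ : Matrix n n ℂ} (hρ : ρ.PosSemidef) (hσ : σ.PosSemidef)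
    (hρ1 : ρ.trace.re = 1) (hσ1 : σ.trace.re ≤ 1) (h : fidelity ρ σ = 1) : ρ = σ := by
  have hle := two_mul_sqrt_fidelity_le hρ hσ
  rw [h, Real.sqrt_one] at hle
  refine eq_of_two_mul_sqrt_fidelity_eq hρ hσ ?_
  rw [h, Real.sqrt_one]
  linarith

end Fidelity

section PartialTranspose

variable {A B : Type*}

lemma ptB_ptB (M : Matrix (A × B) (A × B) ℂ) : ptB (ptB M) = M := rfl

lemma trace_ptB [Fintype A] [Fintype B] (M : Matrix (A × B) (A × B) ℂ) :
    (ptB M).trace = M.trace := rfl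

lemma Matrix.IsHermitian.ptB {M : Matrix (A × B) (A × B) ℂ} (hM : M.IsHermitian) :
    (ptB M).IsHermitian :=
  congrArg _root_.ptB hM.eq

variable [Fintype A] [Fintype B] [DecidableEq A] [DecidableEq B]

lemma re_trace_matAbs_ptB_le_one_of_mem_PPThash2set {σ : Matrix (A × B) (A × B) ℂ}
    (hσ : σ ∈ PPThash2set) : (matAbs (ptB σ)).trace.re ≤ 1 := by
  obtain ⟨-, ω, hω, hnorm⟩ := hσ
  have hωH : ω.IsHermitian := by
    simpa using (hω.add (posSemidef_matAbs (ptB σ))).isHermitian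
  calc (matAbs (ptB σ)).trace.re ≤ ω.trace.re := re_trace_le_of_posSemidef_sub hω
    _ = (ptB ω).trace.re := by rw [trace_ptB]
    _ ≤ traceNorm (ptB ω) := re_trace_le_traceNorm hωH.ptB
    _ ≤ 1 := hnorm

lemma re_trace_le_one_of_mem_PPThash2set {σ : Matrix (A × B) (A × B) ℂ}
    (hσ : σ ∈ PPThash2set) : σ.trace.re ≤ 1 := by
  rw [← trace_ptB]
  exact (re_trace_le_traceNorm hσ.1.isHermitian.ptB).trans
    (re_trace_matAbs_ptB_le_one_of_mem_PPThash2set hσ)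

lemma posSemidef_ptB_of_mem_PPThash2set {σ : Matrix (A × B) (A × B) ℂ}
    (hσ : σ ∈ PPThash2set) (hσ1 : σ.trace.re = 1) : (ptB σ).PosSemidef := by
  have hK := posSemidef_matAbs_sub_self hσ.1.isHermitian.ptB
  have habs : matAbs (ptB σ) - ptB σ = 0 := by
    refine hK.eq_zero_of_re_trace_le ?_
    rw [trace_sub, Complex.sub_re, trace_ptB, hσ1]
    linarith [re_trace_matAbs_ptB_le_one_of_mem_PPThash2set hσ]
  rw [← sub_eq_zero.mp habs]
  exact posSemidef_matAbs _

lemma mem_PPThash2set_of_posSemidef_ptB {ρ : Matrix (A × B) (A × B) ℂ} (hρ : ρ.PosSemidef)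
    (hpt : (ptB ρ).PosSemidef) (hρ1 : ρ.trace.re ≤ 1) : ρ ∈ PPThash2set := by
  refine ⟨hρ, ptB ρ, ?_, ?_⟩
  · rw [matAbs_of_posSemidef hpt, sub_self]
    exact .zero
  · rwa [ptB_ptB, traceNorm, ← matAbs, matAbs_of_posSemidef hρ]

end PartialTranspose

theorem fidelity_PPThash2_le_one_and_eq_one_iff_ppt {A B : Type*}
    [Fintype A] [Fintype B] [DecidableEq A] [DecidableEq B]
    (ρ : Matrix (A × B) (A × B) ℂ) (hρ : ρ.PosSemidef) (htr : ρ.trace = 1) :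
    (∀ σ ∈ PPThash2set (A := A) (B := B), fidelity ρ σ ≤ 1) ∧
      ((∃ σ ∈ PPThash2set (A := A) (B := B), fidelity ρ σ = 1) ↔ (ptB ρ).PosSemidef) := by
  have hρ1 : ρ.trace.re = 1 := by simp [htr]
  refine ⟨fun σ hσ => fidelity_le_one hρ hσ.1 hρ1 (re_trace_le_one_of_mem_PPThash2set hσ),
    ⟨?_, fun hpt => ?_⟩⟩
  · rintro ⟨σ, hσ, hF⟩
    obtain rfl := eq_of_fidelity_eq_one hρ hσ.1 hρ1 (re_trace_le_one_of_mem_PPThash2set hσ) hF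
    exact posSemidef_ptB_of_mem_PPThash2set hσ hρ1
  · exact ⟨ρ, mem_PPThash2set_of_posSemidef_ptB hρ hpt hρ1.le,
      by rw [fidelity_self hρ, hρ1, one_pow]⟩
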